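/- Fix α > −1, a positive integer w, and positive integers m₀,…,m_{w−1}. Then the falling-factorial-type sequence {Π_{k=0}^{w−1}(n−k)^{m_k}}_{n=0}^∞ is a complex zero decreasing sequence for the generalized Laguerre basis L^{(α)}: if p = Σ a_n L_n^{(α)}, then Z_C(Σ Π_{k<w}(n−k)^{m_k} a_n L_n^{(α)}) ≤ Z_C(p). -/

import Mathlib

/-!
Write `B_β = laguerreRaise β`, `B_β q = -x q' + (x - β - 1) q`, so that the Laguerre equation reads
`B_α (L_n') = n L_n`; differentiating it gives `B_{α+s} (L_n^{(s+1)}) = (n - s) L_n^{(s)}`. On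
expansions `Σ c_n L_n^{(s)}`, differentiation thus raises the level `s`, and `B_{α+s}` lowers it
again while multiplying `c_n` by `n - s`. Because every `m_k ≥ 1`, the multiplier
`∏_{k<w} (n - k)^{m_k}` is a composite of these two moves, so it suffices that neither of them
creates non-real zeros.

For the derivative this is Rolle's theorem. For `B_β` with `β > -1`, the function
`h(x) = |x|^{β+1} e^{-x} q(x)` vanishes at `0`, at the real roots of `q` and at `+∞`, and
`h'(x) = -sign(x) |x|^β e^{-x} (B_β q)(x)`. Rolle's theorem gives a root of `B_β q` in every gap of
`{0} ∪ roots(q)` and one to the right of it; together with the roots of `q`, whose multiplicity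
drops by at most one (and not at all at `0`), `B_β q`, of degree `deg q + 1`, has at least one more
real root than `q`.
-/

open Polynomial Finset

open scoped Classical in
/-- Number of non-real complex zeros of a real polynomial, counted with multiplicity. -/
noncomputable def ZC (p : Polynomial ℝ) : ℕ :=
  (((p.map (algebraMap ℝ ℂ)).roots).filter (fun z => z.im ≠ 0)).card

/-- Number of real zeros of a real polynomial, counted with multiplicity. -/
noncomputable def ZR (p : Polynomial ℝ) : ℕ := p.roots.card

open Real Set Filter Topology Asymptotics

lemma card_filter_im_eq_zero_roots_map (p : ℝ[X]) [DecidablePred fun z : ℂ => z.im = 0] :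
    (((p.map (algebraMap ℝ ℂ)).roots).filter (fun z => z.im = 0)).card = ZR p := by
  have hinj : Function.Injective (algebraMap ℝ ℂ) := (algebraMap ℝ ℂ).injective
  suffices ((p.map (algebraMap ℝ ℂ)).roots).filter (fun z => z.im = 0)
      = p.roots.map (algebraMap ℝ ℂ) by rw [this, Multiset.card_map, ZR]
  classical
  ext z
  rw [Multiset.count_filter]
  split_ifs with hz
  · obtain ⟨x, rfl⟩ : ∃ x : ℝ, algebraMap ℝ ℂ x = z := ⟨z.re, Complex.ext (by simp) (by simp [hz])⟩
    rw [Multiset.count_map_eq_count' _ _ hinj, count_roots, count_roots,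
      ← eq_rootMultiplicity_map hinj]
  · refine (Multiset.count_eq_zero.mpr fun hz' => hz ?_).symm
    obtain ⟨x, -, rfl⟩ := Multiset.mem_map.mp hz'
    simp

lemma ZC_add_ZR (p : ℝ[X]) : ZC p + ZR p = p.natDegree := by
  classical
  rw [ZC, ← card_filter_im_eq_zero_roots_map p, ← natDegree_map (algebraMap ℝ ℂ),
    ← IsAlgClosed.card_roots_eq_natDegree, ← Multiset.card_add, add_comm]
  simpa only [ne_eq, not_not] using congrArg Multiset.card (Multiset.filter_add_not _ _)

lemma ZC_derivative_le (q : ℝ[X]) : ZC (derivative q) ≤ ZC q := by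
  have h₁ := ZC_add_ZR q
  have h₂ := ZC_add_ZR (derivative q)
  have h₃ : ZR q ≤ ZR (derivative q) + 1 := card_roots_le_derivative q
  rw [natDegree_derivative] at h₂
  omega

noncomputable def laguerreRaise (β : ℝ) : ℝ[X] →ₗ[ℝ] ℝ[X] :=
  LinearMap.mulLeft ℝ (-X) ∘ₗ derivative + LinearMap.mulLeft ℝ (X - C (β + 1))

lemma laguerreRaise_apply (β : ℝ) (q : ℝ[X]) :
    laguerreRaise β q = -X * derivative q + (X - C (β + 1)) * q := rfl

lemma coeff_laguerreRaise_natDegree_succ (β : ℝ) (q : ℝ[X]) :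
    (laguerreRaise β q).coeff (q.natDegree + 1) = q.leadingCoeff := by
  have hq' : (derivative q).coeff q.natDegree = 0 := by
    rw [coeff_derivative, coeff_eq_zero_of_natDegree_lt (Nat.lt_succ_self _), zero_mul]
  rw [laguerreRaise_apply, coeff_add, neg_mul, coeff_neg, coeff_X_mul, hq', sub_mul, coeff_sub,
    coeff_X_mul, coeff_C_mul, coeff_eq_zero_of_natDegree_lt (Nat.lt_succ_self _)]
  simp

lemma derivative_laguerreRaise (β : ℝ) (r : ℝ[X]) :
    derivative (laguerreRaise β r) = laguerreRaise (β + 1) (derivative r) + r := by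
  simp only [laguerreRaise_apply, derivative_add, derivative_mul, derivative_neg, derivative_X,
    derivative_sub, derivative_C, derivative_one, C_add, C_1]
  ring

section
variable {β : ℝ} {q : ℝ[X]}

lemma natDegree_laguerreRaise (hq : q ≠ 0) :
    (laguerreRaise β q).natDegree = q.natDegree + 1 := by
  refine natDegree_eq_of_le_of_coeff_ne_zero ?_ ?_
  · rw [laguerreRaise_apply]
    refine natDegree_add_le_of_degree_le (natDegree_mul_le.trans ?_) (natDegree_mul_le.trans ?_)
    · rw [natDegree_neg, natDegree_X, natDegree_derivative]; omega
    · have := natDegree_X_sub_C_le (β + 1); omega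
  · rw [coeff_laguerreRaise_natDegree_succ]; exact leadingCoeff_ne_zero.mpr hq

lemma laguerreRaise_ne_zero (hq : q ≠ 0) : laguerreRaise β q ≠ 0 :=
  ne_zero_of_natDegree_gt (n := 0) (by rw [natDegree_laguerreRaise hq]; omega)

lemma rootMultiplicity_sub_one_le_laguerreRaise_rootMultiplicity (hq : q ≠ 0) (r : ℝ) :
    q.rootMultiplicity r - 1 ≤ (laguerreRaise β q).rootMultiplicity r := by
  rw [le_rootMultiplicity_iff (laguerreRaise_ne_zero hq), laguerreRaise_apply]
  have hq' : (X - C r) ^ (q.rootMultiplicity r - 1) ∣ derivative q :=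
    (pow_dvd_pow _ (rootMultiplicity_sub_one_le_derivative_rootMultiplicity q r)).trans
      (pow_rootMultiplicity_dvd _ r)
  exact dvd_add (hq'.mul_left _)
    (((pow_dvd_pow _ (Nat.sub_le _ _)).trans (pow_rootMultiplicity_dvd q r)).mul_left _)

lemma rootMultiplicity_zero_le_laguerreRaise_rootMultiplicity (hq : q ≠ 0) :
    q.rootMultiplicity 0 ≤ (laguerreRaise β q).rootMultiplicity 0 := by
  rw [le_rootMultiplicity_iff (laguerreRaise_ne_zero hq), laguerreRaise_apply]
  have hq0 : (X - C 0) ^ q.rootMultiplicity 0 ∣ q := pow_rootMultiplicity_dvd q 0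
  refine dvd_add ?_ (hq0.mul_left _)
  obtain h | h := Nat.eq_zero_or_pos (q.rootMultiplicity 0)
  · rw [h, pow_zero]; exact one_dvd _
  have hq' : (X - C 0) ^ (q.rootMultiplicity 0 - 1) ∣ derivative q :=
    (pow_dvd_pow _ (rootMultiplicity_sub_one_le_derivative_rootMultiplicity q 0)).trans
      (pow_rootMultiplicity_dvd _ 0)
  rw [map_zero, sub_zero] at hq' ⊢
  rw [← Nat.sub_add_cancel h, pow_succ', neg_mul, dvd_neg]
  exact mul_dvd_mul_left X hq'

lemma laguerreRaise_derivative_derivative_of_eq {l : ℝ}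
    (h : laguerreRaise β (derivative q) = C l * q) :
    laguerreRaise (β + 1) (derivative (derivative q)) = C (l - 1) * derivative q := by
  have h' := congrArg derivative h
  rw [derivative_laguerreRaise, derivative_C_mul] at h'
  rw [C_sub, C_1, sub_mul, one_mul, ← h', add_sub_cancel_right]

end

theorem exists_hasDerivAt_eq_zero_of_tendsto_atTop {f f' : ℝ → ℝ} {a : ℝ}
    (hfc : ContinuousOn f (Ici a)) (hlim : Tendsto f atTop (𝓝 (f a)))
    (hff' : ∀ x ∈ Ioi a, HasDerivAt f (f' x) x) : ∃ c ∈ Ioi a, f' c = 0 := by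
  obtain hx₀ | hx₀ := eq_or_ne (f (a + 1)) (f a)
  · obtain ⟨c, hc, hc'⟩ := exists_hasDerivAt_eq_zero (lt_add_one a) (hfc.mono Icc_subset_Ici_self)
      hx₀.symm fun x hx => hff' x hx.1
    exact ⟨c, hc.1, hc'⟩
  wlog hlt : f a < f (a + 1) generalizing f f'
  · obtain ⟨c, hc, hc'⟩ := this (f := -f) (f' := -f') hfc.neg hlim.neg
      (fun x hx => (hff' x hx).neg) (by simpa using hx₀) (neg_lt_neg ((not_lt.mp hlt).lt_of_ne hx₀))
    exact ⟨c, hc, neg_eq_zero.mp hc'⟩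
  obtain ⟨b, hfb, hb⟩ :=
    ((hlim.eventually (gt_mem_nhds hlt)).and (eventually_gt_atTop (a + 1))).exists
  have hab : a < b := (lt_add_one a).trans hb
  obtain ⟨c, hc, hmax⟩ := isCompact_Icc.exists_isLocalMax_mem_open Ioo_subset_Icc_self
    (hfc.mono Icc_subset_Ici_self) ⟨(lt_add_one a).le, hb.le⟩
    (by rw [Icc_sdiff_Ioo_same hab.le]; rintro z (rfl | rfl) <;> assumption) isOpen_Ioo
  exact ⟨c, hc.1, hmax.hasDerivAt_eq_zero (hff' c hc.1)⟩

noncomputable def laguerreWeight (β : ℝ) (q : ℝ[X]) (x : ℝ) : ℝ :=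
  |x| ^ (β + 1) * exp (-x) * q.eval x

section
variable {β : ℝ} (q : ℝ[X])

lemma continuous_laguerreWeight (hβ : -1 ≤ β) : Continuous (laguerreWeight β q) :=
  (((continuous_rpow_const (by linarith)).comp continuous_abs).mul
    (continuous_exp.comp continuous_neg)).mul q.continuous

lemma laguerreWeight_zero (hβ : -1 < β) : laguerreWeight β q 0 = 0 := by
  simp [laguerreWeight, zero_rpow (by linarith : β + 1 ≠ 0)]

lemma hasDerivAt_laguerreWeight {x : ℝ} (hx : x ≠ 0) :
    HasDerivAt (laguerreWeight β q)
      (-(SignType.sign x) * |x| ^ β * exp (-x) * (laguerreRaise β q).eval x) x := by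
  have habs := ((hasDerivAt_abs hx).rpow_const (p := β + 1) (Or.inl (abs_ne_zero.mpr hx)))
  have hexp := (hasDerivAt_neg x).exp
  refine ((habs.mul hexp).mul (q.hasDerivAt x)).congr_deriv ?_
  simp only [Pi.mul_apply, laguerreRaise_apply, eval_add, eval_mul, eval_neg, eval_X, eval_sub,
    eval_C, add_sub_cancel_right, rpow_add (abs_pos.mpr hx), rpow_one]
  linear_combination
    (-|x| ^ β * exp (-x) * ((derivative q).eval x - q.eval x)) * sign_mul_self x

lemma tendsto_laguerreWeight_atTop : Tendsto (laguerreWeight β q) atTop (𝓝 0) := by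
  have hq : q.eval =O[atTop] (X ^ q.natDegree : ℝ[X]).eval :=
    isBigO_atTop_of_degree_le _ _ (by rw [degree_X_pow]; exact degree_le_natDegree)
  refine ((isBigO_refl (fun x => |x| ^ (β + 1) * exp (-x)) atTop).mul hq).trans_tendsto ?_
  refine (tendsto_rpow_mul_exp_neg_mul_atTop_nhds_zero (β + 1 + q.natDegree) 1 one_pos).congr' ?_
  filter_upwards [eventually_gt_atTop 0] with x hx
  rw [abs_of_pos hx, rpow_add hx, rpow_natCast, eval_X_pow, neg_one_mul]
  ring

end

section
variable {β : ℝ} {q : ℝ[X]}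

lemma card_insert_zero_roots_le_card_roots_laguerreRaise_sdiff (hβ : -1 < β) (hq : q ≠ 0) :
    (insert 0 q.roots.toFinset).card ≤
      ((laguerreRaise β q).roots.toFinset \ insert 0 q.roots.toFinset).card := by
  set T := insert (0 : ℝ) q.roots.toFinset
  set R := (laguerreRaise β q).roots.toFinset
  have hweight : ∀ t ∈ T, laguerreWeight β q t = 0 := by
    intro t ht
    obtain rfl | ht := mem_insert.mp ht
    · exact laguerreWeight_zero q hβ
    · rw [laguerreWeight, (isRoot_of_mem_roots (Multiset.mem_toFinset.mp ht)).eq_zero, mul_zero]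
  have hmem : ∀ c ≠ 0, -(SignType.sign c : ℝ) * |c| ^ β * exp (-c) *
      (laguerreRaise β q).eval c = 0 → c ∈ R := by
    intro c hc h
    have hs : (SignType.sign c : ℝ) ≠ 0 := fun hs => hc (by simpa [hs] using (sign_mul_abs c).symm)
    rw [Multiset.mem_toFinset, mem_roots (laguerreRaise_ne_zero hq)]
    simpa [hs, (rpow_pos_of_pos (abs_pos.mpr hc) β).ne', exp_ne_zero] using h
  have hT : T.Nonempty := insert_nonempty _ _
  have hmax : 0 ≤ T.max' hT := T.le_max' 0 (mem_insert_self _ _)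
  obtain ⟨c, hc, hc'⟩ := exists_hasDerivAt_eq_zero_of_tendsto_atTop
    (continuous_laguerreWeight q hβ.le).continuousOn
    (by rw [hweight _ (T.max'_mem hT)]; exact tendsto_laguerreWeight_atTop q)
    fun x hx => hasDerivAt_laguerreWeight q (hmax.trans_lt hx).ne'
  have hcR : c ∈ R \ T :=
    mem_sdiff.mpr ⟨hmem c (hmax.trans_lt hc).ne' hc', fun h => (T.le_max' c h).not_gt hc⟩
  have hgaps : T.card ≤ (R.erase c \ T).card + 1 :=
    card_le_sdiff_of_interleaved fun x hx y hy hxy hgap => by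
      have hne : ∀ z ∈ Ioo x y, z ≠ 0 := by
        rintro z ⟨hxz, hzy⟩ rfl
        exact hgap 0 (mem_insert_self _ _) ⟨hxz, hzy⟩
      obtain ⟨z, hz, hz'⟩ := exists_hasDerivAt_eq_zero hxy
        (continuous_laguerreWeight q hβ.le).continuousOn
        ((hweight x hx).trans (hweight y hy).symm)
        fun z hz => hasDerivAt_laguerreWeight q (hne z hz)
      refine ⟨z, mem_erase.mpr ⟨?_, hmem z (hne z hz) hz'⟩, hz⟩
      exact (hz.2.trans_le ((T.le_max' y hy).trans hc.le)).ne
  rw [erase_sdiff_comm, card_erase_of_mem hcR] at hgaps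
  have := card_pos.mpr ⟨c, hcR⟩
  omega

lemma ZR_lt_ZR_laguerreRaise (hβ : -1 < β) (hq : q ≠ 0) : ZR q < ZR (laguerreRaise β q) := by
  classical
  unfold ZR
  set T := insert (0 : ℝ) q.roots.toFinset
  set R := (laguerreRaise β q).roots.toFinset
  have hle : q.roots + {0} + (R \ T).val ≤ (laguerreRaise β q).roots + T.val := by
    rw [Multiset.le_iff_count]
    intro x
    simp only [Multiset.count_add, Multiset.count_singleton, count_roots, mem_val,
      Multiset.count_eq_of_nodup (R \ T).nodup, Multiset.count_eq_of_nodup T.nodup,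
      Finset.mem_sdiff]
    by_cases hxT : x ∈ T
    · obtain rfl | hx := eq_or_ne x 0
      · simp [hxT, rootMultiplicity_zero_le_laguerreRaise_rootMultiplicity (β := β) hq]
      · have := rootMultiplicity_sub_one_le_laguerreRaise_rootMultiplicity (β := β) hq x
        simp only [hxT, hx, if_true, if_false, not_true_eq_false, and_false, add_zero]
        omega
    · have hx : x ≠ 0 := fun h => hxT (h ▸ mem_insert_self _ _)
      have hqx : q.rootMultiplicity x = 0 := rootMultiplicity_eq_zero fun h =>
        hxT (mem_insert_of_mem (Multiset.mem_toFinset.mpr ((mem_roots hq).mpr h)))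
      simp only [hxT, hx, hqx, if_false, not_false_eq_true, and_true, zero_add, add_zero]
      split_ifs with hR
      · exact (rootMultiplicity_pos (laguerreRaise_ne_zero hq)).mpr
          (isRoot_of_mem_roots (Multiset.mem_toFinset.mp hR))
      · exact Nat.zero_le _
  have := Multiset.card_le_card hle
  simp only [Multiset.card_add, Multiset.card_singleton, card_val] at this
  have : T.card ≤ (R \ T).card := card_insert_zero_roots_le_card_roots_laguerreRaise_sdiff hβ hq
  omega

lemma ZC_laguerreRaise_le (hβ : -1 < β) (q : ℝ[X]) : ZC (laguerreRaise β q) ≤ ZC q := by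
  obtain rfl | hq := eq_or_ne q 0
  · rw [map_zero]
  have h₁ := ZC_add_ZR q
  have h₂ := ZC_add_ZR (laguerreRaise β q)
  have h₃ := ZR_lt_ZR_laguerreRaise hβ hq
  rw [natDegree_laguerreRaise hq] at h₂
  omega

end

noncomputable def iterDerivSum (L : ℕ → ℝ[X]) (N s : ℕ) (c : ℕ → ℝ) : ℝ[X] :=
  ∑ j ∈ range N, C (c j) * derivative^[s] (L j)

section
variable {α : ℝ} {L : ℕ → ℝ[X]}

lemma laguerreRaise_iterate_derivative
    (hL : ∀ n, laguerreRaise α (derivative (L n)) = C (n : ℝ) * L n) (j s : ℕ) :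
    laguerreRaise (α + s) (derivative^[s + 1] (L j)) = C ((j : ℝ) - s) * derivative^[s] (L j) := by
  induction s with
  | zero => simpa using hL j
  | succ s ih =>
    rw [Function.iterate_succ_apply'] at ih ⊢
    rw [Function.iterate_succ_apply', Nat.cast_succ, ← add_assoc, ← sub_sub]
    exact laguerreRaise_derivative_derivative_of_eq ih

lemma derivative_iterDerivSum (N s : ℕ) (c : ℕ → ℝ) :
    derivative (iterDerivSum L N s c) = iterDerivSum L N (s + 1) c := by
  simp only [iterDerivSum, derivative_sum, derivative_C_mul, Function.iterate_succ_apply']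

lemma laguerreRaise_iterDerivSum
    (hL : ∀ n, laguerreRaise α (derivative (L n)) = C (n : ℝ) * L n) (N s : ℕ) (c : ℕ → ℝ) :
    laguerreRaise (α + s) (iterDerivSum L N (s + 1) c) =
      iterDerivSum L N s (fun j => ((j : ℝ) - s) * c j) := by
  simp only [iterDerivSum, map_sum, ← smul_eq_C_mul, map_smul,
    laguerreRaise_iterate_derivative hL, smul_smul, mul_comm]

end

lemma ZC_iterDerivSum_succ_le (L : ℕ → ℝ[X]) (N s : ℕ) (c : ℕ → ℝ) :
    ZC (iterDerivSum L N (s + 1) c) ≤ ZC (iterDerivSum L N s c) := by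
  rw [← derivative_iterDerivSum]
  exact ZC_derivative_le _

section
variable {α : ℝ} {L : ℕ → ℝ[X]} (hα : -1 < α)
  (hL : ∀ n, laguerreRaise α (derivative (L n)) = C (n : ℝ) * L n) (N : ℕ)
include hα hL

lemma ZC_iterDerivSum_sub_mul_le (s : ℕ) (c : ℕ → ℝ) :
    ZC (iterDerivSum L N s (fun j => ((j : ℝ) - s) * c j)) ≤ ZC (iterDerivSum L N (s + 1) c) := by
  rw [← laguerreRaise_iterDerivSum hL]
  exact ZC_laguerreRaise_le (by linarith [(Nat.cast_nonneg s : (0 : ℝ) ≤ s)]) _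

lemma ZC_iterDerivSum_sub_pow_mul_le (s t : ℕ) (c : ℕ → ℝ) :
    ZC (iterDerivSum L N s (fun j => ((j : ℝ) - s) ^ t * c j)) ≤ ZC (iterDerivSum L N s c) := by
  induction t with
  | zero => simp
  | succ t ih =>
    calc ZC (iterDerivSum L N s (fun j => ((j : ℝ) - s) ^ (t + 1) * c j))
        = ZC (iterDerivSum L N s (fun j => ((j : ℝ) - s) * (((j : ℝ) - s) ^ t * c j))) := by
          simp only [pow_succ', mul_assoc]
      _ ≤ ZC (iterDerivSum L N (s + 1) (fun j => ((j : ℝ) - s) ^ t * c j)) :=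
          ZC_iterDerivSum_sub_mul_le hα hL N s _
      _ ≤ ZC (iterDerivSum L N s (fun j => ((j : ℝ) - s) ^ t * c j)) :=
          ZC_iterDerivSum_succ_le L N s _
      _ ≤ ZC (iterDerivSum L N s c) := ih

lemma ZC_iterDerivSum_prod_mul_le (d : ℕ) (μ : ℕ → ℕ) (hμ : ∀ i < d, 1 ≤ μ i) (s : ℕ)
    (c : ℕ → ℝ) :
    ZC (iterDerivSum L N s (fun j => (∏ i ∈ range d, ((j : ℝ) - (s + i : ℕ)) ^ μ i) * c j)) ≤
      ZC (iterDerivSum L N s c) := by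
  induction d generalizing μ s c with
  | zero => simp
  | succ d ih =>
    obtain ⟨t, ht⟩ := Nat.exists_eq_add_of_le' (hμ 0 d.succ_pos)
    have hcoef : (fun j : ℕ => (∏ i ∈ range (d + 1), ((j : ℝ) - (s + i : ℕ)) ^ μ i) * c j) =
        fun j : ℕ => ((j : ℝ) - s) * ((∏ i ∈ range d, ((j : ℝ) - (s + 1 + i : ℕ)) ^ μ (i + 1)) *
          (((j : ℝ) - s) ^ t * c j)) := by
      funext j
      rw [prod_range_succ', ht, add_zero]
      simp only [add_assoc, add_comm 1]
      ring
    rw [hcoef]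
    calc _ ≤ ZC (iterDerivSum L N (s + 1) (fun j =>
            (∏ i ∈ range d, ((j : ℝ) - (s + 1 + i : ℕ)) ^ μ (i + 1)) *
              (((j : ℝ) - s) ^ t * c j))) := ZC_iterDerivSum_sub_mul_le hα hL N s _
      _ ≤ ZC (iterDerivSum L N (s + 1) (fun j => ((j : ℝ) - s) ^ t * c j)) :=
          ih (fun i => μ (i + 1)) (fun i hi => hμ (i + 1) (by omega)) (s + 1) _
      _ ≤ ZC (iterDerivSum L N s (fun j => ((j : ℝ) - s) ^ t * c j)) :=
          ZC_iterDerivSum_succ_le L N s _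
      _ ≤ ZC (iterDerivSum L N s c) := ZC_iterDerivSum_sub_pow_mul_le hα hL N s t c

end

theorem stmt16_general (α : ℝ) (hα : -1 < α)
    (L : ℕ → Polynomial ℝ)
    (hde : ∀ n, -X * derivative (derivative (L n)) + (X - C (α + 1)) * derivative (L n)
        = C (n : ℝ) * L n)
    (w : ℕ) (m : ℕ → ℕ) (hm : ∀ k < w, 1 ≤ m k)
    (n : ℕ) (a : ℕ → ℝ) :
    ZC (∑ j ∈ Finset.range (n + 1),
          C ((∏ k ∈ Finset.range w, ((j : ℝ) - (k : ℝ)) ^ m k) * a j) * L j)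
      ≤ ZC (∑ j ∈ Finset.range (n + 1), C (a j) * L j) := by
  simpa [iterDerivSum] using ZC_iterDerivSum_prod_mul_le hα hde (n + 1) w m hm 0 a

theorem stmt16 (α : ℝ) (hα : -1 < α)
    (L : ℕ → Polynomial ℝ) (hdeg : ∀ n, (L n).degree = n)
    (hde : ∀ n, -X * derivative (derivative (L n)) + (X - C (α + 1)) * derivative (L n)
        = C (n : ℝ) * L n)
    (w : ℕ) (hw : 1 ≤ w) (m : ℕ → ℕ) (hm : ∀ k < w, 1 ≤ m k)
    (n : ℕ) (a : ℕ → ℝ) :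
    ZC (∑ j ∈ Finset.range (n + 1),
          C ((∏ k ∈ Finset.range w, ((j : ℝ) - (k : ℝ)) ^ m k) * a j) * L j)
      ≤ ZC (∑ j ∈ Finset.range (n + 1), C (a j) * L j) :=
  stmt16_general α hα L hde w m hm n a
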